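/- For λ ∈ (0,1/2)^ℕ, if λ_{n+1} ≥ 1/3 then for every s ∈ {0,1,2}^n the interval J_s is covered by its three children: J_s = J_{s^⌢0} ∪ J_{s^⌢1} ∪ J_{s^⌢2}; consequently C_n(λ) - C_n(λ) = C_{n+1}(λ) - C_{n+1}(λ). -/
import Mathlib


open Set Pointwise Filter MeasureTheory

noncomputable section

/-- `dseq lam n = λ₁ ⋯ λₙ` (with `lam i` the `i`-th term, `1`-indexed); `dseq lam 0 = 1`. -/
def dseq (lam : ℕ → ℝ) (n : ℕ) : ℝ := ∏ i ∈ Finset.Icc 1 n, lam i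

/-- Left endpoint of the interval `I_p` of the central Cantor construction. -/
def leftI (lam : ℕ → ℝ) (p : List Bool) : ℝ :=
  ∑ i : Fin p.length, if p.get i then dseq lam (i : ℕ) - dseq lam ((i : ℕ) + 1) else 0

/-- The closed interval `I_p` of the central Cantor construction. -/
def Iset (lam : ℕ → ℝ) (p : List Bool) : Set ℝ :=
  Icc (leftI lam p) (leftI lam p + dseq lam p.length)

/-- The `n`-th stage `C_n(λ)` of the central Cantor construction. -/
def CnSet (lam : ℕ → ℝ) (n : ℕ) : Set ℝ :=
  ⋃ p ∈ {p : List Bool | p.length = n}, Iset lam p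

/-- The central Cantor set `C(λ)`. -/
def CSet (lam : ℕ → ℝ) : Set ℝ := ⋂ n, CnSet lam n

/-- `J_t = I_p - I_q` where `t i = p i - q i + 1` (pointwise set difference). -/
def Jset (lam : ℕ → ℝ) (t : List (Fin 3)) : Set ℝ :=
  Iset lam (t.map fun a => decide (a = 2)) - Iset lam (t.map fun a => decide (a = 0))

lemma dseq_succ (lam : ℕ → ℝ) (n : ℕ) : dseq lam (n+1) = dseq lam n * lam (n+1) := by
  rw [dseq, dseq, Finset.prod_Icc_succ_top (by omega)]

lemma dseq_pos (lam : ℕ → ℝ) (hlam : ∀ j, 1 ≤ j → lam j ∈ Ioo (0:ℝ) (1/2)) (n : ℕ) :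
    0 < dseq lam n := by
  induction n with
  | zero => simp [dseq]
  | succ k ih => rw [dseq_succ]; exact mul_pos ih (hlam (k+1) (by omega)).1

lemma leftI_eq (lam : ℕ → ℝ) (p : List Bool) :
    leftI lam p = ∑ i ∈ Finset.range p.length,
      (if p.getD i false then dseq lam i - dseq lam (i + 1) else 0) := by
  rw [leftI, ← Fin.sum_univ_eq_sum_range]
  refine Finset.sum_congr rfl fun i _ => ?_
  rw [List.getD_eq_getElem p false i.isLt, List.get_eq_getElem]

lemma leftI_append (lam : ℕ → ℝ) (p : List Bool) (b : Bool) :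
    leftI lam (p ++ [b]) = leftI lam p +
      (if b then dseq lam p.length - dseq lam (p.length + 1) else 0) := by
  rw [leftI_eq, leftI_eq, List.length_append, List.length_singleton,
    Finset.sum_range_succ]
  congr 1
  · refine Finset.sum_congr rfl fun i hi => ?_
    rw [Finset.mem_range] at hi
    rw [List.getD_eq_getElem _ false (by simp; omega), List.getD_eq_getElem _ false hi,
      List.getElem_append_left hi]
  · rw [List.getD_eq_getElem _ false (by simp), List.getElem_append_right (by omega)]
    simp

lemma Iset_sub_Iset (lam : ℕ → ℝ) (hlam : ∀ j, 1 ≤ j → lam j ∈ Ioo (0:ℝ) (1/2))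
    {p q : List Bool} {n : ℕ} (hp : p.length = n) (hq : q.length = n) :
    Iset lam p - Iset lam q =
      Icc (leftI lam p - leftI lam q - dseq lam n) (leftI lam p - leftI lam q + dseq lam n) := by
  have hd := (dseq_pos lam hlam n).le
  rw [Iset, Iset, hp, hq, sub_eq_add_neg, Set.neg_Icc,
    Icc_add_Icc (by linarith) (by linarith)]
  ring_nf

lemma Jset_eq_Icc (lam : ℕ → ℝ) (hlam : ∀ j, 1 ≤ j → lam j ∈ Ioo (0:ℝ) (1/2))
    {t : List (Fin 3)} {n : ℕ} (ht : t.length = n) :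
    Jset lam t = Icc (leftI lam (t.map fun a => decide (a = 2)) - leftI lam (t.map fun a => decide (a = 0)) - dseq lam n)
      (leftI lam (t.map fun a => decide (a = 2)) - leftI lam (t.map fun a => decide (a = 0)) + dseq lam n) :=
  Iset_sub_Iset lam hlam (by simp [ht]) (by simp [ht])

/-- key bijection: the difference `I_p - I_q` depends only on the digit pattern. -/

lemma leftI_zipWith (lam : ℕ → ℝ) {p q : List Bool} {n : ℕ} (hp : p.length = n) (hq : q.length = n) :
    letI t := List.zipWith (fun a b : Bool => if a = b then (1 : Fin 3) else if a then 2 else 0) p q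
    leftI lam (t.map fun a => decide (a = 2)) - leftI lam (t.map fun a => decide (a = 0))
      = leftI lam p - leftI lam q := by
  set t := List.zipWith (fun a b : Bool => if a = b then (1 : Fin 3) else if a then 2 else 0) p q with htdef
  have ht : t.length = n := by simp [t, hp, hq]
  rw [leftI_eq, leftI_eq, leftI_eq, leftI_eq, List.length_map, List.length_map, ht, hp, hq,
    ← Finset.sum_sub_distrib, ← Finset.sum_sub_distrib]
  refine Finset.sum_congr rfl fun i hi => ?_
  rw [Finset.mem_range] at hi
  rw [List.getD_eq_getElem _ false (by simp [ht]; omega),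
      List.getD_eq_getElem _ false (by simp [ht]; omega),
      List.getD_eq_getElem _ false (by omega),
      List.getD_eq_getElem _ false (by omega),
      List.getElem_map, List.getElem_map]
  have : t[i]'(by omega) = if p[i]'(by omega) = q[i]'(by omega) then (1:Fin 3) else if p[i]'(by omega) then 2 else 0 := by
    simp [t, List.getElem_zipWith]
  rw [this]
  rcases p[i]'(by omega) <;> rcases q[i]'(by omega) <;> simp

lemma Jset_union (lam : ℕ → ℝ) (hlam : ∀ j, 1 ≤ j → lam j ∈ Ioo (0:ℝ) (1/2)) {n : ℕ}
    (h : (1:ℝ)/3 ≤ lam (n+1)) {s : List (Fin 3)} (hs : s.length = n) :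
    Jset lam s = Jset lam (s ++ [0]) ∪ Jset lam (s ++ [1]) ∪ Jset lam (s ++ [2]) := by
  have hd : 0 < dseq lam n := dseq_pos lam hlam n
  have hd' : 0 < dseq lam (n+1) := dseq_pos lam hlam (n+1)
  have hdd : dseq lam n ≤ 3 * dseq lam (n+1) := by
    rw [dseq_succ]; nlinarith
  have hd'd : dseq lam (n+1) ≤ dseq lam n := by
    rw [dseq_succ]; nlinarith [(hlam (n+1) (by omega)).2]
  set c2 := leftI lam (s.map fun a => decide (a = 2)) with hc2
  set c0 := leftI lam (s.map fun a => decide (a = 0)) with hc0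
  have key : ∀ a : Fin 3, Jset lam (s ++ [a]) =
      Icc ((c2 + (if a = 2 then dseq lam n - dseq lam (n+1) else 0))
            - (c0 + (if a = 0 then dseq lam n - dseq lam (n+1) else 0)) - dseq lam (n+1))
          ((c2 + (if a = 2 then dseq lam n - dseq lam (n+1) else 0))
            - (c0 + (if a = 0 then dseq lam n - dseq lam (n+1) else 0)) + dseq lam (n+1)) := by
    intro a
    rw [Jset_eq_Icc lam hlam (n := n+1) (t := s ++ [a]) (by simp [hs]), List.map_append,
      List.map_append]
    simp only [List.map_cons, List.map_nil]
    rw [leftI_append, leftI_append, List.length_map, List.length_map, hs, ← hc2, ← hc0]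
    congr 2 <;>
      rcases a with ⟨av, ha⟩ <;> interval_cases av <;> simp [Fin.ext_iff]
  rw [Jset_eq_Icc lam hlam hs, key 0, key 1, key 2]
  have e0 : ((0:Fin 3) = 2) = False := by simp [Fin.ext_iff]
  have e1 : ((1:Fin 3) = 2) = False := by simp [Fin.ext_iff]
  have e2 : ((1:Fin 3) = 0) = False := by simp [Fin.ext_iff]
  have e3 : ((2:Fin 3) = 0) = False := by simp [Fin.ext_iff]
  simp only [e0, e1, e2, e3, if_true, if_false, if_pos rfl, ite_true, ite_false]
  ext x
  simp only [mem_Icc, mem_union]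
  constructor
  · rintro ⟨h1, h2⟩
    rcases le_or_gt x (c2 - (c0 + (dseq lam n - dseq lam (n+1))) + dseq lam (n+1)) with h3 | h3
    · left; left; constructor <;> linarith
    rcases le_or_gt x (c2 - c0 + dseq lam (n+1)) with h4 | h4
    · left; right; constructor <;> linarith
    · right; constructor <;> linarith
  · rintro ((⟨h1,h2⟩|⟨h1,h2⟩)|⟨h1,h2⟩) <;> constructor <;> linarith

lemma CnSub (lam : ℕ → ℝ) (hlam : ∀ j, 1 ≤ j → lam j ∈ Ioo (0:ℝ) (1/2)) (n : ℕ) :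
    CnSet lam n - CnSet lam n = ⋃ t ∈ {t : List (Fin 3) | t.length = n}, Jset lam t := by
  ext x
  simp only [CnSet, Set.mem_sub, mem_iUnion, mem_setOf_eq, exists_prop]
  constructor
  · rintro ⟨a, ha, b, hb, rfl⟩
    obtain ⟨p, hp, hap⟩ := ha
    obtain ⟨q, hq, hbq⟩ := hb
    set t := List.zipWith (fun a b : Bool => if a = b then (1 : Fin 3) else if a then 2 else 0) p q with htdef
    have ht : t.length = n := by simp [htdef, hp, hq]
    refine ⟨t, ht, ?_⟩
    have : Jset lam t = Iset lam p - Iset lam q := by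
      rw [Jset, Iset_sub_Iset lam hlam (n := n) (by simp [ht]) (by simp [ht]),
        Iset_sub_Iset lam hlam hp hq, leftI_zipWith lam hp hq]
    rw [this]
    exact ⟨a, hap, b, hbq, rfl⟩
  · rintro ⟨t, ht, hx⟩
    rw [Jset, Set.mem_sub] at hx
    obtain ⟨a, ha, b, hb, rfl⟩ := hx
    exact ⟨a, ⟨_, by simp [ht], ha⟩, b, ⟨_, by simp [ht], hb⟩, rfl⟩

lemma final (lam : ℕ → ℝ)
    (hlam : ∀ j, 1 ≤ j → lam j ∈ Ioo (0 : ℝ) (1 / 2)) (n : ℕ)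
    (h : (1 : ℝ) / 3 ≤ lam (n + 1)) :
    CnSet lam n - CnSet lam n = CnSet lam (n + 1) - CnSet lam (n + 1) := by
  rw [CnSub lam hlam n, CnSub lam hlam (n+1)]
  apply subset_antisymm
  · refine iUnion₂_subset fun t ht => ?_
    simp only [mem_setOf_eq] at ht
    rw [Jset_union lam hlam h ht]
    refine union_subset (union_subset ?_ ?_) ?_ <;>
      exact subset_iUnion₂_of_subset _ (by simp [ht]) subset_rfl
  · refine iUnion₂_subset fun t ht => ?_
    simp only [mem_setOf_eq] at ht
    have hne : t ≠ [] := by rintro rfl; simp at ht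
    have hlen : t.dropLast.length = n := by simp [ht]
    have hsplit : t.dropLast ++ [t.getLast hne] = t := List.dropLast_concat_getLast hne
    refine subset_iUnion₂_of_subset t.dropLast (by simp [hlen]) ?_
    rw [Jset_union lam hlam h hlen]
    have hcases : t.getLast hne = 0 ∨ t.getLast hne = 1 ∨ t.getLast hne = 2 := by
      rcases t.getLast hne with ⟨v, hv⟩
      interval_cases v <;> simp [Fin.ext_iff]
    rcases hcases with hc | hc | hc <;> conv_lhs => rw [← hsplit, hc]
    · exact (subset_union_left).trans subset_union_left
    · exact (subset_union_right).trans subset_union_left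
    · exact subset_union_right

/-- If `λ_{n+1} ≥ 1/3`, each `J_s` with `s ∈ {0,1,2}ⁿ` is covered by its three children, and
consequently `C_n(λ) - C_n(λ) = C_{n+1}(λ) - C_{n+1}(λ)`. -/
theorem Jset_eq_union_children (lam : ℕ → ℝ)
    (hlam : ∀ j, 1 ≤ j → lam j ∈ Ioo (0 : ℝ) (1 / 2)) (n : ℕ)
    (h : (1 : ℝ) / 3 ≤ lam (n + 1)) :
    (∀ s : List (Fin 3), s.length = n →
      Jset lam s = Jset lam (s ++ [0]) ∪ Jset lam (s ++ [1]) ∪ Jset lam (s ++ [2])) ∧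
    CnSet lam n - CnSet lam n = CnSet lam (n + 1) - CnSet lam (n + 1) := by
  exact ⟨fun s hs => Jset_union lam hlam h hs, final lam hlam n h⟩
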